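/- arXiv:1408.4205 — 3 statements merged into one kernel-verified Lean document; each statement's English description precedes it below -/
import Mathlib

section
/- For the Kronecker square K^{[2]} of a Fredholm integral operator, defined via the squared kernel K²(u,v), the variance bound Var(L_n(u, θ_n)) ≤ ‖f‖²·‖|K^{[2]}|‖^n holds, where L_n(u, θ_n) = K(u,γ(1))K(γ(1),γ(2))⋯K(γ(n-1),γ(n)) f(γ(n)) with γ(i) i.i.d. with law ν; more precisely E[L_n(u,θ_n)²] ≤ ‖f‖²·‖|K^{[2]}|‖^n. -/
open MeasureTheory

/-! By independence and equal laws, the second moment is the integral of the squared path weight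
`(K(u,x₀) K(x₀,x₁) ⋯ K(x_{n-1},x_n) f(x_n))²` against `ν^{⊗(n+1)}`. Integrating out the first
step gives the recursion `m_{n+1}(u) = ∫ K(u,v)² m_n(v) ν(dv) = K^{[2]} m_n (u)` with `m_0 = f²`,
so `m_{n+1} ≤ ‖|K^{[2]}|‖^{n+1} ‖f‖²` by induction. -/

theorem integral_pi_fin_succ_eq_integral_integral_cons {α E : Type*} [MeasurableSpace α]
    [NormedAddCommGroup E] [NormedSpace ℝ E] (μ : Measure α) [SigmaFinite μ] {n : ℕ}
    {g : (Fin (n + 1) → α) → E} (hg : Integrable g (Measure.pi fun _ => μ)) :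
    ∫ x, g x ∂Measure.pi (fun _ => μ) =
      ∫ a, ∫ y, g (Fin.cons a y) ∂Measure.pi (fun _ => μ) ∂μ := by
  have e := (measurePreserving_piFinSuccAbove (fun _ : Fin (n + 1) => μ) 0).symm
  have hcons : ⇑(MeasurableEquiv.piFinSuccAbove (fun _ : Fin (n + 1) => α) 0).symm =
      fun p => Fin.cons p.1 p.2 := by
    ext p; simp [Fin.insertNthEquiv]
  rw [← e.integral_comp', hcons]
  rw [← e.integrable_comp_emb (MeasurableEquiv.measurableEmbedding _), hcons] at hg
  exact integral_prod _ hg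

section PathWeight

variable {V : Type*}

def pathWeight (K : V → V → ℝ) (f : V → ℝ) {n : ℕ} (p : Fin (n + 1) → V) : ℝ :=
  (∏ i : Fin n, K (p i.castSucc) (p i.succ)) * f (p (Fin.last n))

theorem pathWeight_cons (K : V → V → ℝ) (f : V → ℝ) {n : ℕ} (u : V) (p : Fin (n + 1) → V) :
    pathWeight K f (Fin.cons u p : Fin (n + 2) → V) = K u (p 0) * pathWeight K f p := by
  simp [pathWeight, Fin.prod_univ_succ, ← Fin.succ_last, mul_assoc]

theorem cons_castSucc_eq_dite (u : V) {n : ℕ} (x : Fin (n + 1) → V) (i : Fin (n + 1)) :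
    (Fin.cons u x : Fin (n + 2) → V) i.castSucc =
      if _ : (i : ℕ) = 0 then u else x ⟨(i : ℕ) - 1, by omega⟩ := by
  cases i using Fin.cases <;> simp; rfl

theorem continuous_pathWeight [TopologicalSpace V] {K : V → V → ℝ} {f : V → ℝ}
    (hK : Continuous fun p : V × V => K p.1 p.2) (hf : Continuous f) (n : ℕ) :
    Continuous (pathWeight K f (n := n)) := by
  unfold pathWeight
  fun_prop

end PathWeight

noncomputable def pathSecondMoment {V : Type*} [MeasurableSpace V] (ν : Measure V)
    (K : V → V → ℝ) (f : V → ℝ) (n : ℕ) (u : V) : ℝ :=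
  ∫ x : Fin n → V, pathWeight K f (Fin.cons u x : Fin (n + 1) → V) ^ 2 ∂Measure.pi fun _ => ν

section SecondMoment

variable {V : Type*} [MeasurableSpace V] (ν : Measure V) {K : V → V → ℝ} {f : V → ℝ}

theorem pathSecondMoment_nonneg (n : ℕ) (u : V) : 0 ≤ pathSecondMoment ν K f n u :=
  integral_nonneg fun _ => sq_nonneg _

variable [IsProbabilityMeasure ν]

theorem pathSecondMoment_zero (u : V) : pathSecondMoment ν K f 0 u = f u ^ 2 := by
  simp [pathSecondMoment, pathWeight]

variable [TopologicalSpace V] [CompactSpace V]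

theorem integral_sq_le_iSup_integral_sq (hK : Continuous fun p : V × V => K p.1 p.2) (w : V) :
    ∫ v, K w v ^ 2 ∂ν ≤ ⨆ w, ∫ v, K w v ^ 2 ∂ν := by
  obtain ⟨C, hC⟩ := (isCompact_range (hK.pow 2)).bddAbove
  refine le_ciSup (f := fun w => ∫ v, K w v ^ 2 ∂ν) ⟨C, ?_⟩ w
  rintro _ ⟨w, rfl⟩
  calc ∫ v, K w v ^ 2 ∂ν ≤ ∫ _, C ∂ν :=
        integral_mono_of_nonneg (.of_forall fun v => sq_nonneg _) (integrable_const C)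
          (.of_forall fun v => hC ⟨(w, v), rfl⟩)
    _ = C := by simp

variable [SecondCountableTopology V] [OpensMeasurableSpace V]

theorem pathSecondMoment_succ (hK : Continuous fun p : V × V => K p.1 p.2) (hf : Continuous f)
    (n : ℕ) (u : V) :
    pathSecondMoment ν K f (n + 1) u = ∫ v, K u v ^ 2 * pathSecondMoment ν K f n v ∂ν := by
  have hint : Integrable (fun x : Fin (n + 1) → V => pathWeight K f (Fin.cons u x) ^ 2)
      (Measure.pi fun _ => ν) :=
    (((continuous_pathWeight hK hf _).comp (continuous_const.finCons continuous_id)).pow 2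
      ).integrable_of_hasCompactSupport (.of_compactSpace _)
  rw [pathSecondMoment, integral_pi_fin_succ_eq_integral_integral_cons ν hint]
  simp only [pathWeight_cons, Fin.cons_zero, mul_pow, integral_const_mul, pathSecondMoment]

theorem pathSecondMoment_le (hK : Continuous fun p : V × V => K p.1 p.2) (hf : Continuous f)
    (n : ℕ) (u : V) :
    pathSecondMoment ν K f n u ≤ (⨆ v, |f v|) ^ 2 * (⨆ w, ∫ v, K w v ^ 2 ∂ν) ^ n := by
  induction n generalizing u with
  | zero =>
    rw [pathSecondMoment_zero, pow_zero, mul_one, ← sq_abs]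
    gcongr
    exact le_ciSup (isCompact_range hf.abs).bddAbove u
  | succ n ih =>
    set M := ⨆ w, ∫ v, K w v ^ 2 ∂ν
    have hM : 0 ≤ M := Real.iSup_nonneg fun w => integral_nonneg fun v => sq_nonneg _
    set C := (⨆ v, |f v|) ^ 2 * M ^ n
    have hKu : Continuous fun v => K u v ^ 2 := (hK.comp (.prodMk_right u)).pow 2
    calc pathSecondMoment ν K f (n + 1) u = ∫ v, K u v ^ 2 * pathSecondMoment ν K f n v ∂ν :=
          pathSecondMoment_succ ν hK hf n u
      _ ≤ ∫ v, K u v ^ 2 * C ∂ν :=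
          integral_mono_of_nonneg
            (.of_forall fun v => mul_nonneg (sq_nonneg _) (pathSecondMoment_nonneg ν n v))
            ((hKu.integrable_of_hasCompactSupport (.of_compactSpace _)).mul_const C)
            (.of_forall fun v => mul_le_mul_of_nonneg_left (ih v) (sq_nonneg _))
      _ = (∫ v, K u v ^ 2 ∂ν) * C := integral_mul_const _ _
      _ ≤ M * C := by gcongr; exact integral_sq_le_iSup_integral_sq ν hK u
      _ = (⨆ v, |f v|) ^ 2 * M ^ (n + 1) := by ring

end SecondMoment

/-- Variance (second moment) bound via the Kronecker square `K^{[2]}` (with kernel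
`K²(u,v)`, whose operator norm on `C(V)` is `sup_u ∫ K(u,v)² ν(dv)`):
`E[L_n(u,θ_n)²] ≤ ‖f‖² ‖|K^{[2]}|‖^n` where
`L_n(u,θ_n) = K(u,γ(1)) K(γ(1),γ(2)) ⋯ K(γ(n-1),γ(n)) f(γ(n))`
and the `γ(i)` are i.i.d. with law `ν`. -/
theorem kronecker_square_second_moment_bound
    {V Ω : Type*} [MetricSpace V] [CompactSpace V]
    [MeasurableSpace V] [BorelSpace V] [MeasurableSpace Ω]
    (μ : Measure Ω) [IsProbabilityMeasure μ]
    (ν : Measure V) [IsProbabilityMeasure ν]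
    (K : V → V → ℝ) (hK : Continuous fun p : V × V => K p.1 p.2)
    (f : V → ℝ) (hf : Continuous f) (n : ℕ)
    (γ : Fin (n + 1) → Ω → V) (hmeas : ∀ i, Measurable (γ i))
    (hindep : ProbabilityTheory.iIndepFun γ μ)
    (hlaw : ∀ i, μ.map (γ i) = ν) (u : V) :
    (∫ ω,
        ((∏ i : Fin (n + 1),
            K (if h : (i : ℕ) = 0 then u
               else γ ⟨(i : ℕ) - 1, by have := i.isLt; omega⟩ ω) (γ i ω))
          * f (γ (Fin.last n) ω)) ^ 2 ∂μ)
      ≤ (⨆ v : V, |f v|) ^ 2 * (⨆ w : V, ∫ v, (K w v) ^ 2 ∂ν) ^ (n + 1) := by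
  have hγ : Measurable fun ω i => γ i ω := measurable_pi_lambda _ hmeas
  have hjoint : μ.map (fun ω i => γ i ω) = Measure.pi fun _ => ν := by
    rw [(ProbabilityTheory.iIndepFun_iff_map_fun_eq_pi_map
      fun i => (hmeas i).aemeasurable).1 hindep]
    simp only [hlaw]
  have hweight : ∀ x : Fin (n + 1) → V,
      ((∏ i : Fin (n + 1), K (if _ : (i : ℕ) = 0 then u else x ⟨(i : ℕ) - 1, by omega⟩) (x i))
        * f (x (Fin.last n))) = pathWeight K f (Fin.cons u x : Fin (n + 2) → V) := by
    intro x
    simp [pathWeight, cons_castSucc_eq_dite, ← Fin.succ_last]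
  calc _ = ∫ x, pathWeight K f (Fin.cons u x : Fin (n + 2) → V) ^ 2 ∂μ.map fun ω i => γ i ω := by
        rw [integral_map hγ.aemeasurable]
        · exact integral_congr_ae (.of_forall fun ω => congrArg (· ^ 2) (hweight fun i => γ i ω))
        · exact (((continuous_pathWeight hK hf _).comp
            (continuous_const.finCons continuous_id)).pow 2).aestronglyMeasurable
    _ = pathSecondMoment ν K f (n + 1) u := by rw [hjoint, pathSecondMoment]
    _ ≤ _ := pathSecondMoment_le ν hK hf (n + 1) u
end

section
/- As z → 1⁻, the function G_{1/2}(z) = Σ_{n=1}^∞ √n · z^n satisfies G_{1/2}(z) ∼ (√π/2) · |ln z|^{−3/2}, i.e. the ratio G_{1/2}(z) / ((√π/2)(−ln z)^{−3/2}) tends to 1 as z → 1 from below. -/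
/-!
With `t = -ln z` we have `G_{1/2}(z) = ∑_{n ≥ 1} f_t(n)` for `f_t(x) = √x e^{-tx}`. The function
`f_t` increases on `[0, 1/(2t)]`, decreases afterwards and is bounded by `t^{-1/2}`; comparing the
sum with the integral separately on the increasing and on the decreasing part, the sum over the
positive integers differs from `∫_0^∞ f_t = Γ(3/2) t^{-3/2}` by at most twice the maximum. Since
`t^{-1/2} = o(t^{-3/2})` as `t → 0⁺` and `Γ(3/2) = √π/2`, the claim follows.
-/

open Filter Set MeasureTheory Asymptotics Topology Real

theorem MonotoneOn.sum_range_le_integral_add {f : ℝ → ℝ} {n : ℕ}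
    (hf : MonotoneOn f (Icc 0 n)) (h0 : 0 ≤ f 0) :
    ∑ i ∈ Finset.range n, f ↑(i + 1) ≤ (∫ x in 0..n, f x) + f n := by
  have hle : ∑ i ∈ Finset.range n, f i ≤ ∫ x in 0..n, f x := by
    simpa using MonotoneOn.sum_le_integral (x₀ := 0) (a := n) (by simpa using hf)
  have hshift : ∑ i ∈ Finset.range n, f ↑(i + 1) + f 0 = ∑ i ∈ Finset.range n, f i + f n := by
    rw [← Finset.sum_range_succ, Finset.sum_range_succ']
    simp
  linarith

theorem AntitoneOn.tsum_comp_add_le_add_integral {f : ℝ → ℝ} (N : ℕ)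
    (hf : AntitoneOn f (Ici (N : ℝ))) (hint : IntegrableOn f (Ioi (N : ℝ)))
    (hnonneg : ∀ x ∈ Ioi (N : ℝ), 0 ≤ f x) :
    ∑' n : ℕ, f ↑(n + N) ≤ f N + ∫ x in Ioi (N : ℝ), f x := by
  have hsum : Summable fun n : ℕ ↦ f ↑(n + N) :=
    (summable_nat_add_iff N).2 (hf.summable_of_integrableOn_Ioi hint hnonneg)
  rw [hsum.tsum_eq_zero_add, zero_add]
  simp_rw [Nat.add_right_comm _ 1 N]
  exact add_le_add_right (hf.tsum_comp_add_le_integral N hint hnonneg) _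

theorem integral_self_add_one_le {f : ℝ → ℝ} {a M : ℝ} (hf : ∀ x ∈ Ioc a (a + 1), |f x| ≤ M) :
    ∫ x in a..a + 1, f x ≤ M := by
  have hab : a ≤ a + 1 := by linarith
  have := intervalIntegral.norm_integral_le_of_norm_le_const (a := a) (b := a + 1) (f := f)
    fun x hx ↦ (norm_eq_abs (f x)).symm ▸ hf x (uIoc_of_le hab ▸ hx)
  simpa using (le_abs_self _).trans this

theorem abs_tsum_sub_integral_Ioi_le_of_monotoneOn_of_antitoneOn {f : ℝ → ℝ} {M : ℝ} (n₀ : ℕ)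
    (hmono : MonotoneOn f (Icc 0 n₀)) (hanti : AntitoneOn f (Ici ((n₀ + 1 : ℕ) : ℝ)))
    (hnonneg : ∀ x ∈ Ici 0, 0 ≤ f x) (hle : ∀ x ∈ Ici 0, f x ≤ M)
    (hint : IntegrableOn f (Ioi 0)) :
    |∑' n : ℕ, f ↑(n + 1) - ∫ x in Ioi 0, f x| ≤ 2 * M := by
  set N := n₀ + 1
  have hn₀ : (0 : ℝ) ≤ n₀ := n₀.cast_nonneg
  have hintn₀ : IntegrableOn f (Ioi (n₀ : ℝ)) := hint.mono_set (Ioi_subset_Ioi hn₀)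
  have hintN : IntegrableOn f (Ioi (N : ℝ)) := hint.mono_set (Ioi_subset_Ioi N.cast_nonneg)
  have hnonnegN : ∀ x ∈ Ioi (N : ℝ), 0 ≤ f x :=
    fun x hx ↦ hnonneg x (mem_Ici.2 (N.cast_nonneg.trans hx.le))
  have hsum : Summable fun n : ℕ ↦ f n := hanti.summable_of_integrableOn_Ioi hintN hnonnegN
  have hsum_split : ∑' n : ℕ, f ↑(n + 1) =
      ∑ i ∈ Finset.range n₀, f ↑(i + 1) + ∑' n : ℕ, f ↑(n + N) :=
    (((summable_nat_add_iff 1).2 hsum).sum_add_tsum_nat_add n₀).symm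
  have hint_split : ∫ x in Ioi 0, f x =
      (∫ x in 0..n₀, f x) + (∫ x in n₀..N, f x) + ∫ x in Ioi (N : ℝ), f x := by
    rw [← intervalIntegral.integral_interval_add_Ioi hint hintn₀,
      ← intervalIntegral.integral_interval_add_Ioi hintn₀ hintN, add_assoc]
  have hmid_nonneg : 0 ≤ ∫ x in n₀..N, f x :=
    intervalIntegral.integral_nonneg (by simp [N]) fun x hx ↦ hnonneg x (hn₀.trans hx.1)
  have hmid_le : ∫ x in n₀..N, f x ≤ M := by
    push_cast [N]
    refine integral_self_add_one_le fun x hx ↦ ?_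
    have hx : x ∈ Ici 0 := hn₀.trans hx.1.le
    exact abs_le.2 ⟨by linarith [hnonneg x hx, hle x hx], hle x hx⟩
  have hhead_ge : ∫ x in 0..n₀, f x ≤ ∑ i ∈ Finset.range n₀, f ↑(i + 1) := by
    simpa using MonotoneOn.integral_le_sum (x₀ := 0) (a := n₀) (by simpa using hmono)
  have hhead_le := hmono.sum_range_le_integral_add (hnonneg 0 self_mem_Ici)
  have htail_ge := hanti.integral_le_tsum_comp_add N hsum hnonnegN
  have htail_le := hanti.tsum_comp_add_le_add_integral N hintN hnonnegN
  have hfn₀ := hle n₀ hn₀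
  have hfN := hle N (mem_Ici.2 N.cast_nonneg)
  rw [abs_le]
  constructor <;> linarith

theorem abs_tsum_sub_integral_Ioi_le_of_unimodal {f : ℝ → ℝ} {m M : ℝ} (hm : 0 ≤ m)
    (hmono : MonotoneOn f (Icc 0 m)) (hanti : AntitoneOn f (Ici m))
    (hnonneg : ∀ x ∈ Ici 0, 0 ≤ f x) (hle : ∀ x ∈ Ici 0, f x ≤ M)
    (hint : IntegrableOn f (Ioi 0)) :
    |∑' n : ℕ, f ↑(n + 1) - ∫ x in Ioi 0, f x| ≤ 2 * M := by
  refine abs_tsum_sub_integral_Ioi_le_of_monotoneOn_of_antitoneOn ⌊m⌋₊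
    (hmono.mono (Icc_subset_Icc_right (Nat.floor_le hm))) (hanti.mono (Ici_subset_Ici.2 ?_))
    hnonneg hle hint
  push_cast
  exact (Nat.lt_floor_add_one m).le

noncomputable def sqrtExpDecay (t x : ℝ) : ℝ := √x * exp (-(t * x))

theorem sqrtExpDecay_nonneg (t x : ℝ) : 0 ≤ sqrtExpDecay t x := by
  unfold sqrtExpDecay; positivity

theorem continuous_sqrtExpDecay (t : ℝ) : Continuous (sqrtExpDecay t) := by
  unfold sqrtExpDecay; fun_prop

theorem sqrt_mul_exp_neg_le_one {u : ℝ} (hu : 0 ≤ u) : √u * exp (-u) ≤ 1 := by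
  rw [exp_neg, mul_inv_le_iff₀ (exp_pos u), one_mul]
  refine le_trans ?_ (add_one_le_exp u)
  rw [sqrt_le_iff]
  constructor <;> nlinarith

theorem sqrtExpDecay_le {t x : ℝ} (ht : 0 < t) (hx : 0 ≤ x) :
    sqrtExpDecay t x ≤ t ^ (-(1 / 2) : ℝ) := by
  have h := sqrt_mul_exp_neg_le_one (mul_nonneg ht.le hx)
  rw [sqrt_mul ht.le, mul_assoc] at h
  rw [rpow_neg ht.le, ← sqrt_eq_rpow, ← one_div, le_div_iff₀' (sqrt_pos.2 ht)]
  exact h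

theorem hasDerivAt_sqrtExpDecay (t : ℝ) {x : ℝ} (hx : 0 < x) :
    HasDerivAt (sqrtExpDecay t) (exp (-(t * x)) * (1 - 2 * t * x) / (2 * √x)) x := by
  have hexp : HasDerivAt (fun y ↦ exp (-(t * y))) (exp (-(t * x)) * -t) x := by
    simpa using ((hasDerivAt_id x).const_mul t).neg.exp
  refine ((hasDerivAt_sqrt hx.ne').mul hexp).congr_deriv ?_
  field_simp
  rw [sq_sqrt hx.le]
  ring

theorem monotoneOn_sqrtExpDecay {t : ℝ} (ht : 0 < t) :
    MonotoneOn (sqrtExpDecay t) (Icc 0 (1 / (2 * t))) := by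
  refine monotoneOn_of_hasDerivWithinAt_nonneg (convex_Icc _ _)
    (f' := fun x ↦ exp (-(t * x)) * (1 - 2 * t * x) / (2 * √x))
    (continuous_sqrtExpDecay t).continuousOn ?_ ?_ <;> rw [interior_Icc] <;> intro x hx
  · exact (hasDerivAt_sqrtExpDecay t hx.1).hasDerivWithinAt
  · have := (lt_div_iff₀ (by positivity)).1 hx.2
    have := exp_pos (-(t * x))
    apply div_nonneg <;> nlinarith [sqrt_nonneg x]

theorem antitoneOn_sqrtExpDecay {t : ℝ} (ht : 0 < t) :
    AntitoneOn (sqrtExpDecay t) (Ici (1 / (2 * t))) := by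
  have hpeak : 0 < 1 / (2 * t) := by positivity
  refine antitoneOn_of_hasDerivWithinAt_nonpos (convex_Ici _)
    (f' := fun x ↦ exp (-(t * x)) * (1 - 2 * t * x) / (2 * √x))
    (continuous_sqrtExpDecay t).continuousOn ?_ ?_ <;> rw [interior_Ici] <;> intro x hx
  · exact (hasDerivAt_sqrtExpDecay t (hpeak.trans hx)).hasDerivWithinAt
  · have := (div_lt_iff₀ (by positivity)).1 (mem_Ioi.1 hx)
    have := exp_pos (-(t * x))
    apply div_nonpos_of_nonpos_of_nonneg <;> nlinarith [sqrt_nonneg x]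

theorem integrableOn_sqrtExpDecay {t : ℝ} (ht : 0 < t) :
    IntegrableOn (sqrtExpDecay t) (Ioi 0) := by
  refine (integrableOn_rpow_mul_exp_neg_mul_rpow (by norm_num : (-1 : ℝ) < 1 / 2) one_pos ht
    ).congr_fun (fun x _ ↦ ?_) measurableSet_Ioi
  simp [sqrtExpDecay, sqrt_eq_rpow]

theorem Gamma_three_div_two_eq : Gamma (3 / 2) = √π / 2 := by
  rw [show (3 / 2 : ℝ) = 1 / 2 + 1 by norm_num, Gamma_add_one (by norm_num), Gamma_one_half_eq]
  ring

theorem integral_sqrtExpDecay {t : ℝ} (ht : 0 < t) :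
    ∫ x in Ioi 0, sqrtExpDecay t x = √π / 2 * t ^ (-(3 / 2) : ℝ) := by
  have h := integral_rpow_mul_exp_neg_mul_Ioi (by norm_num : (0 : ℝ) < 3 / 2) ht
  rw [Gamma_three_div_two_eq, one_div, inv_rpow ht.le, ← rpow_neg ht.le, mul_comm] at h
  rw [← h]
  refine setIntegral_congr_fun measurableSet_Ioi fun x _ ↦ ?_
  norm_num [sqrtExpDecay, sqrt_eq_rpow]

theorem abs_tsum_sqrtExpDecay_sub_le {t : ℝ} (ht : 0 < t) :
    |∑' n : ℕ, sqrtExpDecay t ↑(n + 1) - √π / 2 * t ^ (-(3 / 2) : ℝ)| ≤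
      2 * t ^ (-(1 / 2) : ℝ) := by
  rw [← integral_sqrtExpDecay ht]
  exact abs_tsum_sub_integral_Ioi_le_of_unimodal (by positivity) (monotoneOn_sqrtExpDecay ht)
    (antitoneOn_sqrtExpDecay ht) (fun x _ ↦ sqrtExpDecay_nonneg t x)
    (fun _ hx ↦ sqrtExpDecay_le ht hx) (integrableOn_sqrtExpDecay ht)

theorem rpow_isLittleO_rpow_nhdsGT_zero {a b : ℝ} (hab : b < a) :
    (fun t : ℝ ↦ t ^ a) =o[𝓝[>] 0] fun t ↦ t ^ b := by
  have hlim : Tendsto (fun t : ℝ ↦ t ^ (a - b)) (𝓝[>] 0) (𝓝 0) := by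
    have := (continuousAt_rpow_const 0 (a - b) (Or.inr (sub_pos.2 hab).le)).tendsto
    rw [zero_rpow (sub_pos.2 hab).ne'] at this
    exact this.mono_left nhdsWithin_le_nhds
  refine ((isLittleO_one_iff ℝ).2 hlim).mul_isBigO (isBigO_refl (fun t : ℝ ↦ t ^ b) _)
    |>.congr' ?_ (by simp)
  filter_upwards [self_mem_nhdsWithin] with t ht
  rw [← rpow_add ht, sub_add_cancel]

theorem tsum_sqrtExpDecay_isEquivalent :
    (fun t ↦ ∑' n : ℕ, sqrtExpDecay t ↑(n + 1)) ~[𝓝[>] 0]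
      fun t ↦ √π / 2 * t ^ (-(3 / 2) : ℝ) := by
  have hbound : (fun t ↦ ∑' n : ℕ, sqrtExpDecay t ↑(n + 1) - √π / 2 * t ^ (-(3 / 2) : ℝ))
      =O[𝓝[>] 0] fun t ↦ t ^ (-(1 / 2) : ℝ) := by
    refine IsBigO.of_bound 2 ?_
    filter_upwards [self_mem_nhdsWithin] with t ht
    rw [norm_of_nonneg (rpow_nonneg (le_of_lt ht) _)]
    exact abs_tsum_sqrtExpDecay_sub_le ht
  exact hbound.trans_isLittleO ((rpow_isLittleO_rpow_nhdsGT_zero (by norm_num)).trans_isBigO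
    (isBigO_self_const_mul (by positivity) _ _))

theorem tsum_sqrtExpDecay_neg_log {z : ℝ} (hz : 0 < z) :
    ∑' n : ℕ, sqrtExpDecay (-log z) ↑(n + 1) = ∑' n : ℕ, √((n : ℝ) + 1) * z ^ (n + 1) := by
  refine tsum_congr fun n ↦ ?_
  rw [sqrtExpDecay, neg_mul, neg_neg, mul_comm (log z), exp_nat_mul, exp_log hz]
  push_cast
  rfl

/-- As `z → 1⁻`, `G_{1/2}(z) = Σ_{n≥1} √n z^n ∼ (√π/2) |ln z|^{-3/2}`. -/
theorem G_half_asymptotic :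
    Tendsto
      (fun z : ℝ =>
        (∑' n : ℕ, Real.sqrt ((n : ℝ) + 1) * z ^ (n + 1)) /
          (Real.sqrt Real.pi / 2 * (-Real.log z) ^ (-(3 / 2) : ℝ)))
      (nhdsWithin 1 (Set.Ioo (0 : ℝ) 1)) (nhds 1) := by
  have hlog : Tendsto (fun z : ℝ ↦ -log z) (𝓝[Ioo 0 1] 1) (𝓝[>] 0) := by
    refine tendsto_nhdsWithin_of_tendsto_nhds_of_eventually_within _ ?_ ?_
    · simpa using (continuousAt_log one_ne_zero).tendsto.neg.mono_left nhdsWithin_le_nhds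
    · filter_upwards [self_mem_nhdsWithin] with z hz
      exact neg_pos.2 (log_neg hz.1 hz.2)
  have hpos : ∀ᶠ z in 𝓝[Ioo 0 1] 1, 0 < -log z := hlog.eventually self_mem_nhdsWithin
  have hratio := (isEquivalent_iff_tendsto_one
    (hpos.mono fun z hz ↦ (mul_pos (by positivity) (rpow_pos_of_pos hz _)).ne')).1
    (tsum_sqrtExpDecay_isEquivalent.comp_tendsto hlog)
  refine hratio.congr' ?_
  filter_upwards [self_mem_nhdsWithin] with z hz
  simp only [Pi.div_apply, Function.comp_apply, tsum_sqrtExpDecay_neg_log hz.1]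
end

section
/- For β ∈ (0,1), α = 1−β, and continuous K, f on [0,T]² and [0,T] respectively, the n-th term of the Neumann series for the weakly singular Volterra equation satisfies |y_n(t)| ≤ ‖f‖·‖K‖^n · (λ t^β)^n · Γ(β)^n / Γ(1+nβ), where y_n(t) = λ^n ∫_0^t ∫_0^{s_1} ⋯ ∫_0^{s_{n-1}} K(t,s_1)⋯K(s_{n-1},s_n) f(s_n) / [(t−s_1)(s_1−s_2)⋯(s_{n-1}−s_n)]^α ds_n⋯ds_1; consequently the Neumann series Σ_n y_n(t) converges absolutely for every λ > 0 and t ∈ [0,T]. -/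
open MeasureTheory

/-- The `n`-th term of the Neumann series for the weakly singular Volterra equation:
`y_n(t) = λ^n ∫_0^t ⋯ ∫_0^{s_{n-1}} K(t,s_1)⋯K(s_{n-1},s_n) f(s_n)
  / [(t-s_1)(s_1-s_2)⋯(s_{n-1}-s_n)]^α ds`, written as an integral over the
ordered simplex `{0 < s_n < ⋯ < s_1 < t}` (for `n = 0`, `y_0(t) = f(t)`). -/
noncomputable def singularNeumannTerm (lam β : ℝ) (K : ℝ → ℝ → ℝ) (f : ℝ → ℝ)
    (t : ℝ) (n : ℕ) : ℝ :=
  lam ^ n *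
    ∫ s in {s : Fin n → ℝ | StrictAnti s ∧ ∀ i, s i ∈ Set.Ioo 0 t},
      (∏ i : Fin n,
          (K (if h : (i : ℕ) = 0 then t else s ⟨(i : ℕ) - 1, by have := i.isLt; omega⟩)
             (s i)
           * ((if h : (i : ℕ) = 0 then t else s ⟨(i : ℕ) - 1, by have := i.isLt; omega⟩)
               - s i) ^ (-(1 - β))))
        * f (if h : n = 0 then t else s ⟨n - 1, by omega⟩)

/-!
Bounding `K` and `f` by `CK` and `Cf` reduces `|y_n(t)|` to `λ^n CK^n Cf` times the integral of
the kernel product `∏ (s_{i-1} - s_i)^(β-1)` (with `s_0 = t`) over the ordered simplex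
`t > s_1 > ⋯ > s_n > 0`. Integrating out `s_2, …, s_n` first leaves the Beta integral
`∫_0^t (t-x)^(β-1) x^((n-1)β) dx`, so by induction the simplex integral is
`t^(nβ) Γ(β)^n / Γ(1+nβ)`. For summability, comparing the Gamma integral with its tail beyond `c`
gives `Γ(1+z) ≥ c^z e^(-c)`; choosing `c^β = 2|x|+1` dominates `x^n / Γ(1+nβ)` by a geometric
series.
-/

open Set Real
open Matrix (vecCons)
open scoped ENNReal

namespace SingularNeumann

variable {n : ℕ}

def orderedSimplex (n : ℕ) (a : ℝ) : Set (Fin n → ℝ) :=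
  {s | StrictAnti s ∧ ∀ i, s i ∈ Ioo 0 a}

theorem mem_orderedSimplex_iff_strictAnti {a : ℝ} {s : Fin n → ℝ} :
    s ∈ orderedSimplex n a ↔ StrictAnti (vecCons a s) ∧ ∀ i, 0 < s i := by
  have hcons : StrictAnti (vecCons a s) ↔ (∀ j, s j < a) ∧ StrictAnti s :=
    Fin.strictMono_cons (α := ℝᵒᵈ)
  simp only [orderedSimplex, mem_ofPred_eq, mem_Ioo, forall_and, hcons]
  tauto

theorem mem_orderedSimplex_iff {a : ℝ} {s : Fin n → ℝ} :
    s ∈ orderedSimplex n a ↔ ∀ i, 0 < s i ∧ s i < vecCons a s i.castSucc := by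
  simp only [mem_orderedSimplex_iff_strictAnti, Fin.strictAnti_iff_succ_lt, Matrix.cons_val_succ,
    forall_and, and_comm]

theorem vecCons_mem_orderedSimplex_iff {a x : ℝ} {y : Fin n → ℝ} :
    vecCons x y ∈ orderedSimplex (n + 1) a ↔ x ∈ Ioo 0 a ∧ y ∈ orderedSimplex n x := by
  simp only [mem_orderedSimplex_iff_strictAnti, strictAnti_vecCons, Fin.forall_fin_succ,
    Matrix.cons_val_zero, Matrix.cons_val_succ, mem_Ioo]
  tauto

theorem orderedSimplex_zero (a : ℝ) : orderedSimplex 0 a = univ := by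
  ext s
  simp [orderedSimplex, Subsingleton.strictAnti]

theorem measurableSet_orderedSimplex (n : ℕ) (a : ℝ) : MeasurableSet (orderedSimplex n a) := by
  have : orderedSimplex n a = ⋂ i, {s | 0 < s i} ∩ {s | s i < vecCons a s i.castSucc} := by
    ext s
    simp only [mem_orderedSimplex_iff, mem_iInter, mem_inter_iff, mem_ofPred_eq]
  rw [this]
  refine .iInter fun i => (measurableSet_lt measurable_const (measurable_pi_apply i)).inter
    (measurableSet_lt (measurable_pi_apply i) ?_)
  fun_prop

-- `vecCons a s i.castSucc` is the point preceding `s i` in the chain `a > s 0 > s 1 > ⋯`.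
noncomputable def singularWeight (β a : ℝ) (s : Fin n → ℝ) : ℝ :=
  ∏ i, (vecCons a s i.castSucc - s i) ^ (β - 1)

theorem singularWeight_vecCons (β a x : ℝ) (y : Fin n → ℝ) :
    singularWeight β a (vecCons x y) = (a - x) ^ (β - 1) * singularWeight β x y := by
  simp only [singularWeight, Fin.prod_univ_succ, ← Fin.succ_castSucc]
  simp

theorem singularWeight_pos {β a : ℝ} {s : Fin n → ℝ} (hs : s ∈ orderedSimplex n a) :
    0 < singularWeight β a s :=
  Finset.prod_pos fun i _ => rpow_pos_of_pos (sub_pos.2 (mem_orderedSimplex_iff.1 hs i).2) _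

theorem measurable_singularWeight (β a : ℝ) : Measurable (singularWeight (n := n) β a) := by
  unfold singularWeight
  fun_prop

theorem intervalIntegral_rpow_mul_sub_rpow {a u v : ℝ} (ha : 0 < a) (hu : 0 < u) (hv : 0 < v) :
    ∫ x in 0..a, x ^ (u - 1) * (a - x) ^ (v - 1)
      = a ^ (u + v - 1) * (Gamma u * Gamma v / Gamma (u + v)) := by
  apply Complex.ofReal_injective
  have hcongr : ∀ x ∈ uIcc 0 a, (((x ^ (u - 1) * (a - x) ^ (v - 1) : ℝ)) : ℂ)
      = (x : ℂ) ^ ((u : ℂ) - 1) * ((a : ℂ) - x) ^ ((v : ℂ) - 1) := by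
    intro x hx
    rw [uIcc_of_le ha.le] at hx
    push_cast [Complex.ofReal_cpow hx.1, Complex.ofReal_cpow (sub_nonneg.2 hx.2)]
    rfl
  rw [← intervalIntegral.integral_ofReal, intervalIntegral.integral_congr hcongr,
    Complex.betaIntegral_scaled _ _ ha, Complex.betaIntegral_eq_Gamma_mul_div _ _ (by simpa)
    (by simpa)]
  push_cast [Complex.ofReal_cpow ha.le, ← Complex.Gamma_ofReal]
  rfl

theorem lintegral_Ioo_rpow_mul_sub_rpow {a u v : ℝ} (ha : 0 < a) (hu : 0 < u) (hv : 0 < v) :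
    ∫⁻ x in Ioo 0 a, ENNReal.ofReal (x ^ (u - 1) * (a - x) ^ (v - 1))
      = ENNReal.ofReal (a ^ (u + v - 1) * (Gamma u * Gamma v / Gamma (u + v))) := by
  have hI := intervalIntegral_rpow_mul_sub_rpow ha hu hv
  have hpos : 0 < a ^ (u + v - 1) * (Gamma u * Gamma v / Gamma (u + v)) := by
    have := Gamma_pos_of_pos hu
    have := Gamma_pos_of_pos hv
    have := Gamma_pos_of_pos (add_pos hu hv)
    positivity
  -- A nonzero interval integral is in particular a convergent one.
  have hint : IntegrableOn (fun x => x ^ (u - 1) * (a - x) ^ (v - 1)) (Ioc 0 a) :=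
    (intervalIntegrable_iff_integrableOn_Ioc_of_le ha.le).1
      (intervalIntegral.intervalIntegrable_of_integral_ne_zero (hI ▸ hpos.ne'))
  rw [← ofReal_integral_eq_lintegral_ofReal (hint.mono_set Ioo_subset_Ioc_self),
    ← integral_Ioc_eq_integral_Ioo, ← intervalIntegral.integral_of_le ha.le, hI]
  filter_upwards [ae_restrict_mem measurableSet_Ioo] with x hx
  exact mul_nonneg (rpow_nonneg hx.1.le _) (rpow_nonneg (sub_nonneg.2 hx.2.le) _)

theorem lintegral_orderedSimplex_succ (a : ℝ) {g : (Fin (n + 1) → ℝ) → ℝ≥0∞}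
    (hg : Measurable g) :
    ∫⁻ s in orderedSimplex (n + 1) a, g s
      = ∫⁻ x in Ioo 0 a, ∫⁻ y in orderedSimplex n x, g (vecCons x y) := by
  have he : MeasurePreserving (fun p : ℝ × (Fin n → ℝ) => vecCons p.1 p.2) := by
    convert (volume_preserving_piFinSuccAbove (fun _ : Fin (n + 1) => ℝ) 0).symm with p
    simp [MeasurableEquiv.piFinSuccAbove_symm_apply]
    rfl
  have hind := hg.indicator (measurableSet_orderedSimplex (n + 1) a)
  rw [← lintegral_indicator (measurableSet_orderedSimplex _ _), ← he.lintegral_comp hind,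
    Measure.volume_eq_prod,
    lintegral_prod (fun p => (orderedSimplex (n + 1) a).indicator g (vecCons p.1 p.2))
      (hind.comp he.measurable).aemeasurable,
    ← lintegral_indicator measurableSet_Ioo]
  congr 1 with x
  by_cases hx : x ∈ Ioo 0 a
  · rw [indicator_of_mem hx, ← lintegral_indicator (measurableSet_orderedSimplex n x)]
    congr 1 with y
    by_cases hy : y ∈ orderedSimplex n x
    · rw [indicator_of_mem hy, indicator_of_mem (vecCons_mem_orderedSimplex_iff.2 ⟨hx, hy⟩)]
    · rw [indicator_of_notMem hy,
        indicator_of_notMem fun h => hy (vecCons_mem_orderedSimplex_iff.1 h).2]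
  · rw [indicator_of_notMem hx]
    have hzero (y : Fin n → ℝ) : (orderedSimplex (n + 1) a).indicator g (vecCons x y) = 0 :=
      indicator_of_notMem (fun h => hx (vecCons_mem_orderedSimplex_iff.1 h).1) _
    simp only [hzero, lintegral_zero]

theorem lintegral_singularWeight {β : ℝ} (hβ : 0 < β) (n : ℕ) {a : ℝ} (ha : 0 ≤ a) :
    ∫⁻ s in orderedSimplex n a, ENNReal.ofReal (singularWeight β a s)
      = ENNReal.ofReal (a ^ (n * β) * Gamma β ^ n / Gamma (1 + n * β)) := by
  induction n generalizing a with
  | zero => simp [orderedSimplex_zero, singularWeight, volume_pi]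
  | succ n ih =>
    rw [lintegral_orderedSimplex_succ a (measurable_singularWeight β a).ennreal_ofReal]
    rcases ha.eq_or_lt with rfl | ha
    · simp [zero_rpow (by positivity : ((n : ℝ) + 1) * β ≠ 0)]
    have hslice : ∀ x ∈ Ioo 0 a,
        ∫⁻ y in orderedSimplex n x, ENNReal.ofReal (singularWeight β a (vecCons x y))
          = ENNReal.ofReal (x ^ ((n * β + 1) - 1) * (a - x) ^ (β - 1))
            * ENNReal.ofReal (Gamma β ^ n / Gamma (1 + n * β)) := by
      intro x hx
      have hax : 0 ≤ (a - x) ^ (β - 1) := rpow_nonneg (sub_nonneg.2 hx.2.le) _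
      have hx' : 0 ≤ x ^ (n * β) := rpow_nonneg hx.1.le _
      simp_rw [singularWeight_vecCons, ENNReal.ofReal_mul hax]
      rw [lintegral_const_mul' _ _ ENNReal.ofReal_ne_top, ih hx.1.le, add_sub_cancel_right,
        ← ENNReal.ofReal_mul hax, ← ENNReal.ofReal_mul (by positivity)]
      congr 1
      ring
    rw [setLIntegral_congr_fun measurableSet_Ioo hslice,
      lintegral_mul_const' _ _ ENNReal.ofReal_ne_top,
      lintegral_Ioo_rpow_mul_sub_rpow ha (by positivity) hβ, ← ENNReal.ofReal_mul (by positivity)]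
    have hΓ : 0 < Gamma (1 + n * β) := Gamma_pos_of_pos (by positivity)
    rw [show (n : ℝ) * β + 1 + β - 1 = (n + 1 : ℕ) * β by push_cast; ring,
      show (n : ℝ) * β + 1 + β = 1 + (n + 1 : ℕ) * β by push_cast; ring,
      add_comm _ (1 : ℝ)]
    congr 1
    field_simp
    ring

theorem singularWeight_nonneg_ae (β a : ℝ) :
    0 ≤ᵐ[volume.restrict (orderedSimplex n a)] singularWeight β a := by
  filter_upwards [ae_restrict_mem (measurableSet_orderedSimplex n a)] with s hs
  exact (singularWeight_pos hs).le

theorem integrableOn_singularWeight {β : ℝ} (hβ : 0 < β) (n : ℕ) {a : ℝ} (ha : 0 ≤ a) :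
    IntegrableOn (singularWeight β a) (orderedSimplex n a) := by
  refine ⟨(measurable_singularWeight β a).aestronglyMeasurable, ?_⟩
  rw [hasFiniteIntegral_iff_ofReal (singularWeight_nonneg_ae β a),
    lintegral_singularWeight hβ n ha]
  exact ENNReal.ofReal_lt_top

theorem integral_singularWeight {β : ℝ} (hβ : 0 < β) (n : ℕ) {a : ℝ} (ha : 0 ≤ a) :
    ∫ s in orderedSimplex n a, singularWeight β a s
      = a ^ (n * β) * Gamma β ^ n / Gamma (1 + n * β) := by
  rw [integral_eq_lintegral_of_nonneg_ae (singularWeight_nonneg_ae β a)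
      (measurable_singularWeight β a).aestronglyMeasurable, lintegral_singularWeight hβ n ha,
    ENNReal.toReal_ofReal (by positivity)]

theorem rpow_mul_exp_neg_le_Gamma_one_add {c z : ℝ} (hc : 0 ≤ c) (hz : 0 ≤ z) :
    c ^ z * exp (-c) ≤ Gamma (1 + z) := by
  have hint : IntegrableOn (fun x => exp (-x) * x ^ z) (Ioi 0) := by
    simpa using GammaIntegral_convergent (s := 1 + z) (by linarith)
  rw [Gamma_eq_integral (by linarith), add_sub_cancel_left, ← integral_exp_neg_Ioi c,
    ← integral_const_mul]
  calc ∫ x in Ioi c, c ^ z * exp (-x) ≤ ∫ x in Ioi c, exp (-x) * x ^ z := by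
        refine setIntegral_mono_on ((integrableOn_exp_neg_Ioi c).const_mul _)
          (hint.mono_set (Ioi_subset_Ioi hc)) measurableSet_Ioi fun x hx => ?_
        rw [mul_comm]
        gcongr
        exact hx.le
    _ ≤ ∫ x in Ioi 0, exp (-x) * x ^ z :=
        setIntegral_mono_set hint
          (ae_restrict_of_forall_mem measurableSet_Ioi fun x hx =>
            mul_nonneg (exp_pos _).le (rpow_nonneg (le_of_lt hx) _))
          (Ioi_subset_Ioi hc).eventuallyLE

theorem summable_pow_div_Gamma_one_add_mul {β : ℝ} (hβ : 0 < β) (x : ℝ) :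
    Summable fun n : ℕ => x ^ n / Gamma (1 + n * β) := by
  set r := 2 * |x| + 1
  have hr : 0 < r := by positivity
  set c := r ^ β⁻¹
  have hratio : |x| / r < 1 := (div_lt_one hr).2 (by linarith [abs_nonneg x])
  refine .of_norm_bounded ((summable_geometric_of_lt_one (by positivity) hratio).mul_left (exp c))
    fun n => ?_
  have hcn : c ^ (n * β) = r ^ n := by
    rw [← rpow_mul hr.le, mul_comm (n : ℝ), inv_mul_cancel_left₀ hβ.ne', rpow_natCast]
  have hΓ := rpow_mul_exp_neg_le_Gamma_one_add (rpow_nonneg hr.le β⁻¹)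
    (by positivity : 0 ≤ n * β)
  rw [hcn] at hΓ
  rw [norm_div, norm_pow, Real.norm_eq_abs, Real.norm_of_nonneg (by positivity)]
  calc |x| ^ n / Gamma (1 + n * β) ≤ |x| ^ n / (r ^ n * exp (-c)) :=
        div_le_div_of_nonneg_left (by positivity) (by positivity) hΓ
    _ = exp c * (|x| / r) ^ n := by
        rw [exp_neg, div_pow]
        field_simp

theorem dite_eq_vecCons_castSucc (a : ℝ) (s : Fin n → ℝ) (i : Fin n) :
    (if _ : (i : ℕ) = 0 then a else s ⟨(i : ℕ) - 1, by have := i.isLt; omega⟩)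
      = vecCons a s i.castSucc := by
  rcases i with ⟨_ | k, hk⟩
  · rfl
  · exact (Matrix.cons_val_succ' _ _ _).symm

theorem dite_eq_vecCons_last (a : ℝ) (s : Fin n → ℝ) :
    (if h : n = 0 then a else s ⟨n - 1, by omega⟩) = vecCons a s (Fin.last n) := by
  cases n
  · rfl
  · exact (Matrix.cons_val_succ' _ _ _).symm

theorem singularNeumannTerm_eq (lam β : ℝ) (K : ℝ → ℝ → ℝ) (f : ℝ → ℝ) (t : ℝ) :
    singularNeumannTerm lam β K f t n = lam ^ n * ∫ s in orderedSimplex n t,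
      (∏ i, K (vecCons t s i.castSucc) (s i) * (vecCons t s i.castSucc - s i) ^ (β - 1))
        * f (vecCons t s (Fin.last n)) := by
  simp only [singularNeumannTerm, dite_eq_vecCons_castSucc, dite_eq_vecCons_last, neg_sub]
  rfl

theorem vecCons_mem_Icc {a : ℝ} (ha : 0 ≤ a) {s : Fin n → ℝ} (hs : s ∈ orderedSimplex n a)
    (j : Fin (n + 1)) : vecCons a s j ∈ Icc 0 a :=
  Fin.cases (by simpa using ha) (fun i => by simpa using Ioo_subset_Icc_self (hs.2 i)) j

theorem abs_neumannIntegrand_le {β a CK Cf : ℝ} {K : ℝ → ℝ → ℝ} {f : ℝ → ℝ}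
    (hK : ∀ u ∈ Icc 0 a, ∀ v ∈ Icc 0 a, |K u v| ≤ CK) (hf : ∀ u ∈ Icc 0 a, |f u| ≤ Cf)
    (ha : 0 ≤ a) {s : Fin n → ℝ} (hs : s ∈ orderedSimplex n a) :
    |(∏ i, K (vecCons a s i.castSucc) (s i) * (vecCons a s i.castSucc - s i) ^ (β - 1))
        * f (vecCons a s (Fin.last n))| ≤ CK ^ n * Cf * singularWeight β a s := by
  have hfac (i : Fin n) :
      |K (vecCons a s i.castSucc) (s i) * (vecCons a s i.castSucc - s i) ^ (β - 1)|
        ≤ CK * (vecCons a s i.castSucc - s i) ^ (β - 1) := by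
    have hpos := rpow_pos_of_pos (sub_pos.2 (mem_orderedSimplex_iff.1 hs i).2) (β - 1)
    rw [abs_mul, abs_of_pos hpos]
    exact mul_le_mul_of_nonneg_right
      (hK _ (vecCons_mem_Icc ha hs _) _ (Ioo_subset_Icc_self (hs.2 i))) hpos.le
  have hprod :=
    Finset.prod_le_prod (s := Finset.univ) (fun i _ => abs_nonneg _) fun i _ => hfac i
  rw [Finset.prod_mul_distrib, Finset.prod_const, Finset.card_univ, Fintype.card_fin] at hprod
  rw [abs_mul, Finset.abs_prod]
  calc _ ≤ CK ^ n * singularWeight β a s * Cf :=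
        mul_le_mul hprod (hf _ (vecCons_mem_Icc ha hs _)) (abs_nonneg _)
          ((Finset.prod_nonneg fun _ _ => abs_nonneg _).trans hprod)
    _ = CK ^ n * Cf * singularWeight β a s := by ring

theorem abs_singularNeumannTerm_le {lam β t CK Cf : ℝ} {K : ℝ → ℝ → ℝ} {f : ℝ → ℝ}
    (hlam : 0 ≤ lam) (hβ : 0 < β) (hK : ∀ u ∈ Icc 0 t, ∀ v ∈ Icc 0 t, |K u v| ≤ CK)
    (hf : ∀ u ∈ Icc 0 t, |f u| ≤ Cf) (ht : 0 ≤ t) (n : ℕ) :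
    |singularNeumannTerm lam β K f t n|
      ≤ Cf * CK ^ n * (lam * t ^ β) ^ n * Gamma β ^ n / Gamma (1 + n * β) := by
  rw [singularNeumannTerm_eq, abs_mul, abs_pow, abs_of_nonneg hlam]
  calc _ ≤ lam ^ n * ∫ s in orderedSimplex n t, CK ^ n * Cf * singularWeight β t s := by
        gcongr
        rw [← Real.norm_eq_abs]
        refine norm_integral_le_of_norm_le ((integrableOn_singularWeight hβ n ht).const_mul _) ?_
        filter_upwards [ae_restrict_mem (measurableSet_orderedSimplex n t)] with s hs
        exact abs_neumannIntegrand_le hK hf ht hs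
    _ = _ := by
        rw [integral_const_mul, integral_singularWeight hβ n ht, mul_comm (n : ℝ),
          rpow_mul_natCast ht]
        ring

end SingularNeumann

open SingularNeumann

theorem singular_neumann_bound_general (T lam β : ℝ) (hlam : 0 < lam)
    (hβ : β ∈ Set.Ioo (0 : ℝ) 1)
    (K : ℝ → ℝ → ℝ) (f : ℝ → ℝ)
    (CK Cf : ℝ)
    (hCK : ∀ t ∈ Set.Icc (0 : ℝ) T, ∀ s ∈ Set.Icc (0 : ℝ) T, |K t s| ≤ CK)
    (hCf : ∀ t ∈ Set.Icc (0 : ℝ) T, |f t| ≤ Cf)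
    (t : ℝ) (ht : t ∈ Set.Icc (0 : ℝ) T) :
    (∀ n : ℕ,
      |singularNeumannTerm lam β K f t n|
        ≤ Cf * CK ^ n * (lam * t ^ β) ^ n * Real.Gamma β ^ n / Real.Gamma (1 + n * β)) ∧
    Summable (fun n : ℕ => |singularNeumannTerm lam β K f t n|) := by
  have hsub : Icc 0 t ⊆ Icc 0 T := Icc_subset_Icc_right ht.2
  have hbound := abs_singularNeumannTerm_le hlam.le hβ.1
    (fun u hu v hv => hCK u (hsub hu) v (hsub hv)) (fun u hu => hCf u (hsub hu)) ht.1
  refine ⟨hbound, .of_nonneg_of_le (fun n => abs_nonneg _) hbound ?_⟩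
  exact ((summable_pow_div_Gamma_one_add_mul hβ.1 (CK * (lam * t ^ β) * Gamma β)).mul_left
    Cf).congr fun n => by ring

/-- Bound on the Neumann terms of the weakly singular Volterra equation:
`|y_n(t)| ≤ ‖f‖ ‖K‖^n (λ t^β)^n Γ(β)^n / Γ(1+nβ)`, and consequently the Neumann
series converges absolutely. -/
theorem singular_neumann_bound (T lam β : ℝ) (hT : 0 < T) (hlam : 0 < lam)
    (hβ : β ∈ Set.Ioo (0 : ℝ) 1)
    (K : ℝ → ℝ → ℝ) (f : ℝ → ℝ)
    (hK : Continuous fun p : ℝ × ℝ => K p.1 p.2) (hf : Continuous f)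
    (CK Cf : ℝ)
    (hCK : ∀ t ∈ Set.Icc (0 : ℝ) T, ∀ s ∈ Set.Icc (0 : ℝ) T, |K t s| ≤ CK)
    (hCf : ∀ t ∈ Set.Icc (0 : ℝ) T, |f t| ≤ Cf)
    (t : ℝ) (ht : t ∈ Set.Icc (0 : ℝ) T) :
    (∀ n : ℕ,
      |singularNeumannTerm lam β K f t n|
        ≤ Cf * CK ^ n * (lam * t ^ β) ^ n * Real.Gamma β ^ n / Real.Gamma (1 + n * β)) ∧
    Summable (fun n : ℕ => |singularNeumannTerm lam β K f t n|) :=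
  singular_neumann_bound_general T lam β hlam hβ K f CK Cf hCK hCf t ht
end
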